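/- arXiv:1502.02893 — 2 statements merged into one kernel-verified Lean document; each statement's English description precedes it below -/
import Mathlib

section
/- For the clique transmission transition probabilities: (a) if there exists a disjoint clique of size $j$ with $j>i$, then $p^{c}_{k,i,j}=0$ (the resulting maximal clique cannot be smaller than the existing disjoint clique); and (b) for $j\le i$, the conditional probability dominates the no-disjoint-clique case: $p^{c}_{k,i,0}\le p^{c}_{k,i,j}$. -/
open Finset MeasureTheory

/-- The transition probability `p^c_{k,i,j}` for the clique action: a clique of
size `k` is transmitted, each receiver fails independently with probability
`p` (`ω l = true` means receiver `l` fails), and conditioned on the largest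
disjoint clique having size `j`, the new maximal clique size is
`max(#failures, j)`; `j = 0` recovers the no-disjoint-clique binomial case. -/
noncomputable def pcProb (k : ℕ) (p : ENNReal) (hp : p ≤ 1) (i j : ℕ) : ENNReal :=
  Measure.pi (fun _ : Fin k => (PMF.bernoulli p.toNNReal
    (ENNReal.coe_le_one_iff.1 (ENNReal.coe_toNNReal_le_self.trans hp))).toMeasure)
    {ω | max (univ.filter (fun l => ω l = true)).card j = i}

section MaxLevelSets

variable {Ω : Type*} (f : Ω → ℕ) {i j j' : ℕ}

theorem setOf_max_eq_eq_empty (h : i < j) : {ω | max (f ω) j = i} = ∅ :=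
  Set.eq_empty_of_forall_notMem fun ω hω => by
    have := le_max_right (f ω) j
    simp only [Set.mem_ofPred_eq] at hω
    omega

theorem setOf_max_eq_subset (hj : j ≤ j') (hi : j' ≤ i) :
    {ω | max (f ω) j = i} ⊆ {ω | max (f ω) j' = i} := fun ω hω => by
  simp only [Set.mem_ofPred_eq] at hω ⊢
  omega

end MaxLevelSets

/-- (a) if the disjoint clique size `j` exceeds `i`, then
`p^c_{k,i,j} = 0` (the resulting maximal clique cannot be smaller than the
existing disjoint clique); (b) for `j ≤ i` the conditional probability
dominates the no-disjoint-clique case: `p^c_{k,i,0} ≤ p^c_{k,i,j}`. -/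
theorem pc_properties (k : ℕ) (p : ENNReal) (hp : p ≤ 1) :
    (∀ i j : ℕ, i < j → pcProb k p hp i j = 0) ∧
    (∀ i j : ℕ, j ≤ i → pcProb k p hp i 0 ≤ pcProb k p hp i j) := by
  refine ⟨fun i j hij => ?_, fun i j hji => ?_⟩
  · rw [pcProb, setOf_max_eq_eq_empty _ hij, measure_empty]
  · exact measure_mono (setOf_max_eq_subset _ (Nat.zero_le j) hji)
end

section
/- Let $V:\{0,\dots,K\}\to\mathbb{R}$ be nondecreasing with increments bounded above by $d$ (i.e., $V(k+1)-V(k)\le d$) and bounded below by $V(k)-V(k-i)\ge i-c$ for all valid $i,k$. Then the clique-action Bellman term $\tilde S(k)=\gamma\sum_{i=0}^{k}p^{c}_{k,i}V(i)+(1-p)k$ satisfies the bounds $\tilde S(k)\le \gamma V(0)+\gamma p k d+(1-p)k + a_2(k)$ and $\tilde S(k)\ge \gamma V(k)-\gamma(1-p)kd+(1-p)k-b_2(k)$, where $a_2(k), b_2(k)\ge 0$ are correction terms that vanish when $p^{c}_{k,i}=p^{i}(1-p)^{k-i}\binom{k}{i}$ for all $i$. -/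
open Finset

lemma binom_sum_one (p : ℝ) (k : ℕ) :
    ∑ i ∈ range (k + 1), p ^ i * (1 - p) ^ (k - i) * (k.choose i) = 1 := by
  have h := add_pow p (1 - p) k
  have hps : p + (1 - p) = 1 := by ring
  rw [hps, one_pow] at h
  exact h.symm

lemma binom_mean (p : ℝ) (k : ℕ) :
    ∑ i ∈ range (k + 1), p ^ i * (1 - p) ^ (k - i) * (k.choose i) * i = p * k := by
  cases k with
  | zero => simp
  | succ m =>
    rw [Finset.sum_range_succ']
    have key : ∀ j ∈ range (m + 1),
        p ^ (j+1) * (1 - p) ^ (m + 1 - (j+1)) * (((m+1).choose (j+1) : ℝ)) * ((j+1 : ℕ) : ℝ)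
        = (p * (m+1)) * (p ^ j * (1 - p) ^ (m - j) * (m.choose j)) := by
      intro j hj
      have hc : (m + 1) * m.choose j = (m+1).choose (j+1) * (j+1) :=
        Nat.add_one_mul_choose_eq m j
      have hcr : ((m+1).choose (j+1) : ℝ) * ((j : ℝ)+1) = ((m:ℝ)+1) * (m.choose j) := by
        have := congrArg (Nat.cast (R := ℝ)) hc
        push_cast at this
        linarith
      have hsub : m + 1 - (j + 1) = m - j := by omega
      rw [hsub, pow_succ]
      push_cast
      linear_combination (p ^ j * p * (1 - p) ^ (m - j)) * hcr
    rw [Finset.sum_congr rfl key, ← Finset.mul_sum, binom_sum_one p m]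
    push_cast
    ring

lemma lin_growth (V : ℕ → ℝ) (d : ℝ) (hup : ∀ k, V (k + 1) - V k ≤ d) :
    ∀ m n, m ≤ n → V n - V m ≤ ((n - m : ℕ) : ℝ) * d := by
  intro m n hmn
  induction n, hmn using Nat.le_induction with
  | base => simp
  | succ n hmn ih =>
    have h1 := hup n
    have hcast : ((n + 1 - m : ℕ) : ℝ) = ((n - m : ℕ) : ℝ) + 1 := by
      have : n + 1 - m = (n - m) + 1 := by omega
      rw [this]; push_cast; ring
    rw [hcast]
    linarith

/-- bounds on the clique-action Bellman term
`S̃(k) = γ ∑_{i=0}^k p^c_{k,i} V(i) + (1-p)k` for a value function `V` that is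
nondecreasing with increments bounded above by `d` and satisfying
`V(k) - V(k-i) ≥ i - c`:
`S̃(k) ≤ γV(0) + γpkd + (1-p)k + a₂(k)` and
`S̃(k) ≥ γV(k) - γ(1-p)kd + (1-p)k - b₂(k)`, where the nonnegative correction
terms `a₂, b₂` vanish when `p^c_{k,i} = p^i (1-p)^{k-i} C(k,i)`. -/
theorem clique_term_bounds (K : ℕ) (γ p d c : ℝ)
    (hγ0 : 0 < γ) (hγ1 : γ < 1) (hp0 : 0 < p) (hp1 : p < 1)
    (V : ℕ → ℝ) (hmono : Monotone V)
    (hup : ∀ k, V (k + 1) - V k ≤ d)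
    (hlow : ∀ i k, 1 ≤ i → i ≤ k → k ≤ K → (i : ℝ) - c ≤ V k - V (k - i))
    (pc : ℕ → ℕ → ℝ)
    (hpc0 : ∀ k i, 0 ≤ pc k i)
    (hpcsum : ∀ k ≤ K, ∑ i ∈ range (k + 1), pc k i = 1)
    (hpcge : ∀ k ≤ K, ∀ i ∈ range (k + 1),
      p ^ i * (1 - p) ^ (k - i) * (k.choose i) ≤ pc k i) :
    ∃ a2 b2 : ℕ → ℝ,
      (∀ k, 0 ≤ a2 k ∧ 0 ≤ b2 k) ∧
      (∀ k ≤ K, γ * ∑ i ∈ range (k + 1), pc k i * V i + (1 - p) * k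
          ≤ γ * V 0 + γ * p * k * d + (1 - p) * k + a2 k) ∧
      (∀ k ≤ K, γ * V k - γ * (1 - p) * k * d + (1 - p) * k - b2 k
          ≤ γ * ∑ i ∈ range (k + 1), pc k i * V i + (1 - p) * k) ∧
      ((∀ k ≤ K, ∀ i ∈ range (k + 1),
          pc k i = p ^ i * (1 - p) ^ (k - i) * (k.choose i)) →
        ∀ k ≤ K, a2 k = 0 ∧ b2 k = 0) := by
  refine ⟨fun k => max 0 (γ * ∑ i ∈ range (k + 1), pc k i * V i - (γ * V 0 + γ * p * k * d)),
          fun k => max 0 (γ * V k - γ * (1 - p) * k * d - γ * ∑ i ∈ range (k + 1), pc k i * V i),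
          fun k => ⟨le_max_left _ _, le_max_left _ _⟩, ?_, ?_, ?_⟩
  · intro k hk
    have := le_max_right 0 (γ * ∑ i ∈ range (k + 1), pc k i * V i - (γ * V 0 + γ * p * k * d))
    linarith
  · intro k hk
    have := le_max_right 0 (γ * V k - γ * (1 - p) * k * d - γ * ∑ i ∈ range (k + 1), pc k i * V i)
    linarith
  · intro heq k hk
    have hd0 : 0 ≤ d := le_trans (by linarith [hmono (Nat.zero_le 1)] : (0:ℝ) ≤ V 1 - V 0) (hup 0)
    have hsum1 : ∑ i ∈ range (k + 1), pc k i = 1 := hpcsum k hk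
    have hlin := lin_growth V d hup
    -- rewrite pc as binomial
    have hbsum : ∑ i ∈ range (k + 1), p ^ i * (1 - p) ^ (k - i) * (k.choose i) = 1 :=
      binom_sum_one p k
    have hbmean : ∑ i ∈ range (k + 1), p ^ i * (1 - p) ^ (k - i) * (k.choose i) * i = p * k :=
      binom_mean p k
    constructor
    · -- a2 k = 0
      have hub : ∑ i ∈ range (k + 1), pc k i * V i
          ≤ ∑ i ∈ range (k + 1), p ^ i * (1 - p) ^ (k - i) * (k.choose i) * (V 0 + i * d) := by
        apply Finset.sum_le_sum
        intro i hi
        rw [heq k hk i hi]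
        have hVi : V i ≤ V 0 + (i : ℝ) * d := by
          have := hlin 0 i (Nat.zero_le i)
          simp at this; linarith
        have hnn : 0 ≤ p ^ i * (1 - p) ^ (k - i) * (k.choose i) :=
          mul_nonneg (mul_nonneg (pow_nonneg hp0.le i) (pow_nonneg (by linarith) _)) (Nat.cast_nonneg _)
        nlinarith
      have hrhs : ∑ i ∈ range (k + 1), p ^ i * (1 - p) ^ (k - i) * (k.choose i) * (V 0 + i * d)
          = V 0 + p * k * d := by
        have : ∀ i ∈ range (k + 1),
            p ^ i * (1 - p) ^ (k - i) * (k.choose i) * (V 0 + i * d)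
            = p ^ i * (1 - p) ^ (k - i) * (k.choose i) * V 0
              + (p ^ i * (1 - p) ^ (k - i) * (k.choose i) * i) * d := by
          intro i _; ring
        rw [Finset.sum_congr rfl this, Finset.sum_add_distrib, ← Finset.sum_mul,
          ← Finset.sum_mul, hbsum, hbmean]
        ring
      have hle : γ * ∑ i ∈ range (k + 1), pc k i * V i - (γ * V 0 + γ * p * k * d) ≤ 0 := by
        nlinarith [hub, hrhs]
      exact max_eq_left hle
    · -- b2 k = 0
      have hlb : ∑ i ∈ range (k + 1), p ^ i * (1 - p) ^ (k - i) * (k.choose i) * (V k - ((k:ℝ) - i) * d)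
          ≤ ∑ i ∈ range (k + 1), pc k i * V i := by
        apply Finset.sum_le_sum
        intro i hi
        rw [heq k hk i hi]
        have hik : i ≤ k := by simpa [Nat.lt_succ_iff] using Finset.mem_range.mp hi
        have hVk : V k - V i ≤ ((k:ℝ) - i) * d := by
          have := hlin i k hik
          have hc : ((k - i : ℕ) : ℝ) = (k:ℝ) - i := by
            push_cast [hik]; ring
          linarith [hc ▸ this]
        have hnn : 0 ≤ p ^ i * (1 - p) ^ (k - i) * (k.choose i) :=
          mul_nonneg (mul_nonneg (pow_nonneg hp0.le i) (pow_nonneg (by linarith) _)) (Nat.cast_nonneg _)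
        nlinarith
      have hlhs : ∑ i ∈ range (k + 1), p ^ i * (1 - p) ^ (k - i) * (k.choose i) * (V k - ((k:ℝ) - i) * d)
          = V k - (1 - p) * k * d := by
        have : ∀ i ∈ range (k + 1),
            p ^ i * (1 - p) ^ (k - i) * (k.choose i) * (V k - ((k:ℝ) - i) * d)
            = p ^ i * (1 - p) ^ (k - i) * (k.choose i) * (V k - (k:ℝ) * d)
              + (p ^ i * (1 - p) ^ (k - i) * (k.choose i) * i) * d := by
          intro i _; ring
        rw [Finset.sum_congr rfl this, Finset.sum_add_distrib, ← Finset.sum_mul,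
          ← Finset.sum_mul, hbsum, hbmean]
        ring
      have hle : γ * V k - γ * (1 - p) * k * d - γ * ∑ i ∈ range (k + 1), pc k i * V i ≤ 0 := by
        nlinarith [hlb, hlhs]
      exact max_eq_left hle
end
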